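/- Let f, g : Ω_+ → ℝ be continuous functions satisfying f(x) + g(P((e+x)^{1/2})y) = g(y) + f(P((e+y)^{1/2})x) for all x, y ∈ Ω_+, and assume f(α·e) → 0 as α → 0⁺. Then f is additive: f(u) + f(z) = f(u+z) for all u, z ∈ Ω_+. -/

import Mathlib

open Matrix Filter Topology

abbrev Mat (r : ℕ) : Type := Matrix (Fin r) (Fin r) ℝ

open Classical in
/-- the square root of a positive semidefinite matrix (junk value `0` otherwise) -/
noncomputable def msqrt {r : ℕ} (x : Mat r) : Mat r :=
  if h : x.PosSemidef then
    (h.1.eigenvectorUnitary : Mat r) * diagonal ((↑) ∘ (√·) ∘ h.1.eigenvalues) *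
      (star h.1.eigenvectorUnitary : Mat r)
  else 0

/-!
Putting a multiple of `e` into either slot of the equation gives two rescaling rules,
`f (β (e + y)) = f (β e) + g ((1 + β) y) - g y` and
`f ((1 + s) x) - f x = g (s (e + x)) - g (s e)`.
The first, with continuity of `g` and `f (α e) → 0`, shows that `f (t v) → 0` as `t → 0⁺`, even
when `v` moves while staying above a fixed positive definite matrix. Two instances of the second
and one more instance of the equation eliminate `g`: with `Q = (e + u/s)^{1/2}`,
`M = (e + s (e + z/(1+s)))^{1/2}` and `V = Q z Q + (1 + 1/s) u`,
`f (z/(1+s)) + f (u/s) - f (V/(1+s)) = f z + f (M (u/s) M) - f V`.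
As `s → ∞` we have `V → u + z` and `M (u/s) M → u`, so the left side tends to `0` and the right
side to `f z + f u - f (u + z)`.
-/

variable {r : ℕ}

section MatrixFacts

open scoped MatrixOrder

theorem Matrix.PosDef.exists_smul_sub_one_posDef {n : Type*} [Fintype n] [DecidableEq n]
    {v : Matrix n n ℝ} (hv : v.PosDef) : ∃ c : ℝ, 0 < c ∧ (c • v - 1).PosDef := by
  rcases subsingleton_or_nontrivial (Matrix n n ℝ) with _ | _
  · exact ⟨1, one_pos, by rwa [Subsingleton.elim (1 • v - 1) v]⟩
  obtain ⟨ε, hε, hεv⟩ := (CFC.exists_pos_algebraMap_le_iff hv.1.isSelfAdjoint).2 <|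
    (StarOrderedRing.isStrictlyPositive_iff_spectrum_pos v).1 hv.isStrictlyPositive
  have hgap : (v - ε • 1).PosSemidef := by
    rw [← Algebra.algebraMap_eq_smul_one]
    exact hεv
  refine ⟨2 / ε, by positivity, ?_⟩
  have hsplit : (2 / ε) • v - 1 = (2 / ε) • (v - ε • 1) + 1 := by
    rw [smul_sub, smul_smul, div_mul_cancel₀ _ hε.ne']
    module
  rw [hsplit]
  exact PosDef.posSemidef_add (hgap.smul (by positivity)) PosDef.one

theorem msqrt_eq_sqrt {x : Mat r} (hx : x.PosSemidef) : msqrt x = CFC.sqrt x := by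
  rw [msqrt, dif_pos hx, CFC.sqrt_eq_real_sqrt x hx.nonneg, cfcₙ_eq_cfc, hx.1.cfc_eq,
    IsHermitian.cfc, Unitary.conjStarAlgAut_apply]
  rfl

theorem posSemidef_msqrt {x : Mat r} (hx : x.PosSemidef) : (msqrt x).PosSemidef :=
  msqrt_eq_sqrt hx ▸ (CFC.sqrt_nonneg x).posSemidef

theorem msqrt_mul_self {x : Mat r} (hx : x.PosSemidef) : msqrt x * msqrt x = x :=
  msqrt_eq_sqrt hx ▸ CFC.sqrt_mul_sqrt_self x hx.nonneg

theorem msqrt_smul {c : ℝ} (hc : 0 ≤ c) {x : Mat r} (hx : x.PosSemidef) :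
    msqrt (c • x) = √c • msqrt x := by
  rw [msqrt_eq_sqrt (hx.smul hc), msqrt_eq_sqrt hx]
  refine CFC.sqrt_unique ?_ ((CFC.sqrt_nonneg x).posSemidef.smul (Real.sqrt_nonneg c)).nonneg
  rw [smul_mul_smul_comm, Real.mul_self_sqrt hc, CFC.sqrt_mul_sqrt_self x hx.nonneg]

theorem msqrt_one : msqrt (1 : Mat r) = 1 := by
  rw [msqrt_eq_sqrt PosSemidef.one, CFC.sqrt_one]

-- The operator norm is only a device to reach `CFC.continuousOn_sqrt`: it induces the
-- usual (entrywise) topology on matrices.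
open scoped Matrix.Norms.L2Operator in
theorem continuousOn_msqrt : ContinuousOn (msqrt : Mat r → Mat r) {x | x.PosSemidef} := by
  simp_rw [← nonneg_iff_posSemidef]
  exact CFC.continuousOn_sqrt.congr fun _ hx => msqrt_eq_sqrt hx.posSemidef

end MatrixFacts

theorem tendsto_msqrt_one {ι : Type*} {l : Filter ι} {a : ι → Mat r}
    (ha : Tendsto a l (𝓝 1)) (hpd : ∀ᶠ i in l, (a i).PosSemidef) :
    Tendsto (fun i => msqrt (a i)) l (𝓝 1) := by
  have := (continuousOn_msqrt 1 PosSemidef.one).tendsto.comp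
    (tendsto_nhdsWithin_iff.2 ⟨ha, hpd⟩)
  rwa [msqrt_one] at this

theorem Matrix.PosSemidef.msqrt_mul_mul_msqrt {x y : Mat r} (hx : x.PosSemidef)
    (hy : y.PosSemidef) : (msqrt y * x * msqrt y).PosSemidef := by
  simpa only [(posSemidef_msqrt hy).1.eq] using hx.mul_mul_conjTranspose_same (msqrt y)

theorem Matrix.PosDef.msqrt_mul_mul_msqrt {x y : Mat r} (hx : x.PosDef) (hy : y.PosDef) :
    (msqrt y * x * msqrt y).PosDef := by
  have hunit : IsUnit (msqrt y) :=
    isUnit_of_mul_isUnit_left (msqrt_mul_self hy.posSemidef ▸ hy.isUnit)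
  simpa only [(posSemidef_msqrt hy.posSemidef).1.eq] using
    hx.conjTranspose_mul_mul_same (mulVec_injective_iff_isUnit.2 hunit)

theorem msqrt_mul_smul_one_mul {x : Mat r} (hx : x.PosSemidef) (c : ℝ) :
    msqrt x * (c • 1) * msqrt x = c • x := by
  rw [mul_smul_comm, mul_one, smul_mul_assoc, msqrt_mul_self hx]

theorem msqrt_one_add_smul_one_mul_mul {c : ℝ} (hc : 0 ≤ c) (y : Mat r) :
    msqrt (1 + c • 1) * y * msqrt (1 + c • 1) = (1 + c) • y := by
  have hc' : 0 ≤ 1 + c := by linarith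
  have hscalar : (1 : Mat r) + c • 1 = (1 + c) • 1 := by rw [add_smul, one_smul]
  rw [hscalar, msqrt_smul hc' PosSemidef.one, msqrt_one, smul_mul_assoc, one_mul,
    mul_smul_comm, mul_one, smul_smul, Real.mul_self_sqrt hc']

def SymmetricEquation (f g : Mat r → ℝ) : Prop :=
  ∀ x y : Mat r, x.PosDef → y.PosDef →
    f x + g (msqrt (1 + x) * y * msqrt (1 + x)) =
      g y + f (msqrt (1 + y) * x * msqrt (1 + y))

namespace SymmetricEquation

variable {f g : Mat r → ℝ}

theorem smul_one_add_eq (h : SymmetricEquation f g) {β : ℝ} (hβ : 0 < β) {y : Mat r}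
    (hy : y.PosDef) : f (β • (1 + y)) = f (β • 1) + g ((1 + β) • y) - g y := by
  have := h (β • 1) y (PosDef.one.smul hβ) hy
  rw [msqrt_one_add_smul_one_mul_mul hβ.le,
    msqrt_mul_smul_one_mul (PosDef.one.add hy).posSemidef] at this
  linarith

theorem one_add_smul_sub_eq (h : SymmetricEquation f g) {s : ℝ} (hs : 0 < s) {x : Mat r}
    (hx : x.PosDef) : f ((1 + s) • x) - f x = g (s • (1 + x)) - g (s • 1) := by
  have := h x (s • 1) hx (PosDef.one.smul hs)
  rw [msqrt_one_add_smul_one_mul_mul hs.le,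
    msqrt_mul_smul_one_mul (PosDef.one.add hx).posSemidef] at this
  linarith

variable {ι : Type*} {l : Filter ι}

theorem tendsto_smul_one_add (h : SymmetricEquation f g) (hg : ContinuousOn g {x | x.PosDef})
    (hlim : Tendsto (fun α : ℝ => f (α • (1 : Mat r))) (𝓝[>] 0) (𝓝 0))
    {β : ι → ℝ} {y : ι → Mat r} {y₀ : Mat r} (hβ : Tendsto β l (𝓝[>] 0)) (hy : Tendsto y l (𝓝 y₀))
    (hyp : ∀ᶠ i in l, (y i).PosDef) (hy₀ : y₀.PosDef) :
    Tendsto (fun i => f (β i • (1 + y i))) l (𝓝 0) := by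
  obtain ⟨hβ0, hβpos⟩ := tendsto_nhdsWithin_iff.1 hβ
  have hgy : Tendsto (fun i => g (y i)) l (𝓝 (g y₀)) :=
    (hg y₀ hy₀).tendsto.comp (tendsto_nhdsWithin_iff.2 ⟨hy, hyp⟩)
  have hgβy : Tendsto (fun i => g ((1 + β i) • y i)) l (𝓝 (g y₀)) := by
    refine (hg y₀ hy₀).tendsto.comp (tendsto_nhdsWithin_iff.2 ⟨?_, ?_⟩)
    · simpa using (hβ0.const_add 1).smul hy
    · filter_upwards [hβpos, hyp] with i hβi hyi
      exact hyi.smul (by linarith [Set.mem_Ioi.1 hβi])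
  have hsum := ((hlim.comp hβ).add hgβy).sub hgy
  rw [zero_add, sub_self] at hsum
  refine hsum.congr' ?_
  filter_upwards [hβpos, hyp] with i hβi hyi
  exact (h.smul_one_add_eq hβi hyi).symm

theorem tendsto_smul_of_le (h : SymmetricEquation f g) (hg : ContinuousOn g {x | x.PosDef})
    (hlim : Tendsto (fun α : ℝ => f (α • (1 : Mat r))) (𝓝[>] 0) (𝓝 0))
    {t : ι → ℝ} {v : ι → Mat r} {v₀ v₁ : Mat r} (ht : Tendsto t l (𝓝[>] 0))
    (hv : Tendsto v l (𝓝 v₀)) (hv₁ : v₁.PosDef)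
    (hle : ∀ᶠ i in l, (v i - v₁).PosSemidef) (hle₀ : (v₀ - v₁).PosSemidef) :
    Tendsto (fun i => f (t i • v i)) l (𝓝 0) := by
  obtain ⟨c, hc, hcv₁⟩ := hv₁.exists_smul_sub_one_posDef
  have hshift : ∀ w : Mat r, (w - v₁).PosSemidef → (c • w - 1).PosDef := fun w hw => by
    have hsplit : c • w - 1 = (c • v₁ - 1) + c • (w - v₁) := by module
    rw [hsplit]
    exact hcv₁.add_posSemidef (hw.smul hc.le)
  obtain ⟨ht0, htpos⟩ := tendsto_nhdsWithin_iff.1 ht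
  have htc : Tendsto (fun i => t i / c) l (𝓝[>] 0) :=
    tendsto_nhdsWithin_iff.2
      ⟨by simpa using ht0.div_const c, htpos.mono fun _ hti => div_pos hti hc⟩
  refine (h.tendsto_smul_one_add hg hlim htc ((hv.const_smul c).sub_const 1)
    (hle.mono fun i => hshift _) (hshift _ hle₀)).congr fun i => ?_
  rw [add_sub_cancel, smul_smul, div_mul_cancel₀ _ hc.ne']

theorem tendsto_smul (h : SymmetricEquation f g) (hg : ContinuousOn g {x | x.PosDef})
    (hlim : Tendsto (fun α : ℝ => f (α • (1 : Mat r))) (𝓝[>] 0) (𝓝 0))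
    {t : ι → ℝ} {v : Mat r} (ht : Tendsto t l (𝓝[>] 0)) (hv : v.PosDef) :
    Tendsto (fun i => f (t i • v)) l (𝓝 0) := by
  have hzero : (v - v).PosSemidef := by simpa using PosSemidef.zero
  exact h.tendsto_smul_of_le hg hlim ht tendsto_const_nhds hv
    (Eventually.of_forall fun _ => hzero) hzero

theorem three_point_identity (h : SymmetricEquation f g) {s : ℝ} (hs : 0 < s) {u z : Mat r}
    (hu : u.PosDef) (hz : z.PosDef) :
    f ((1 + s)⁻¹ • z) + f (s⁻¹ • u) -
        f ((1 + s)⁻¹ • (msqrt (1 + s⁻¹ • u) * z * msqrt (1 + s⁻¹ • u) + (1 + s⁻¹) • u)) =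
      f z + f (msqrt (1 + s • (1 + (1 + s)⁻¹ • z)) * (s⁻¹ • u) *
          msqrt (1 + s • (1 + (1 + s)⁻¹ • z))) -
        f (msqrt (1 + s⁻¹ • u) * z * msqrt (1 + s⁻¹ • u) + (1 + s⁻¹) • u) := by
  set Q := msqrt (1 + s⁻¹ • u)
  set V := Q * z * Q + (1 + s⁻¹) • u
  have hs1 : 0 < 1 + s := by linarith
  have h1u : (1 + s⁻¹ • u).PosSemidef :=
    PosSemidef.one.add (hu.posSemidef.smul (inv_pos.2 hs).le)
  have hx : ((1 + s)⁻¹ • z).PosDef := hz.smul (inv_pos.2 hs1)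
  have hV : V.PosDef :=
    PosDef.posSemidef_add (hz.posSemidef.msqrt_mul_mul_msqrt h1u) (hu.smul (by positivity))
  have I1 := h.one_add_smul_sub_eq hs hx
  have I2 := h (s⁻¹ • u) (s • (1 + (1 + s)⁻¹ • z)) (hu.smul (inv_pos.2 hs))
    ((PosDef.one.add hx).smul hs)
  have I3 := h.one_add_smul_sub_eq hs (hV.smul (inv_pos.2 hs1))
  have hconj : Q * (s • (1 + (1 + s)⁻¹ • z)) * Q = s • (1 + (1 + s)⁻¹ • V) := by
    rw [mul_smul_comm, smul_mul_assoc, mul_add, add_mul, mul_one, msqrt_mul_self h1u,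
      mul_smul_comm, smul_mul_assoc]
    match_scalars <;> field_simp
    ring
  rw [smul_smul, mul_inv_cancel₀ hs1.ne', one_smul] at I1 I3
  rw [hconj] at I2
  linarith

end SymmetricEquation

theorem tendsto_msqrt_one_add_inv_smul {u : Mat r} (hu : u.PosSemidef) :
    Tendsto (fun s : ℝ => msqrt (1 + s⁻¹ • u)) atTop (𝓝 1) := by
  refine tendsto_msqrt_one ?_ ?_
  · simpa using tendsto_const_nhds.add ((tendsto_inv_atTop_zero (𝕜 := ℝ)).smul_const u)
  · filter_upwards [eventually_gt_atTop 0] with s hs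
    exact PosSemidef.one.add (hu.smul (inv_pos.2 hs).le)

theorem tendsto_msqrt_mul_inv_smul_mul_msqrt {u z : Mat r} (hu : u.PosDef)
    (hz : z.PosSemidef) :
    Tendsto (fun s : ℝ => msqrt (1 + s • (1 + (1 + s)⁻¹ • z)) * (s⁻¹ • u) *
      msqrt (1 + s • (1 + (1 + s)⁻¹ • z))) atTop (𝓝[{x | x.PosDef}] u) := by
  set N : ℝ → Mat r := fun s => msqrt (s⁻¹ • 1 + (1 + (1 + s)⁻¹ • z))
  have hpd : ∀ᶠ s : ℝ in atTop, (s⁻¹ • 1 + (1 + (1 + s)⁻¹ • z) : Mat r).PosDef := by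
    filter_upwards [eventually_gt_atTop 0] with s hs
    exact (PosDef.one.smul (inv_pos.2 hs)).add_posSemidef
      (PosSemidef.one.add (hz.smul (inv_pos.2 (by linarith)).le))
  have hN : Tendsto N atTop (𝓝 1) := by
    refine tendsto_msqrt_one ?_ (hpd.mono fun _ hs => hs.posSemidef)
    have hinv1 : Tendsto (fun s : ℝ => (1 + s)⁻¹) atTop (𝓝 0) :=
      tendsto_inv_atTop_zero.comp (tendsto_atTop_add_const_left _ 1 tendsto_id)
    simpa using (tendsto_inv_atTop_zero.smul_const (1 : Mat r)).add
      (tendsto_const_nhds.add (hinv1.smul_const z))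
  have hNuN := (hN.mul_const u).mul hN
  rw [one_mul, mul_one] at hNuN
  have hrescale : ∀ᶠ s : ℝ in atTop, N s * u * N s = msqrt (1 + s • (1 + (1 + s)⁻¹ • z)) *
      (s⁻¹ • u) * msqrt (1 + s • (1 + (1 + s)⁻¹ • z)) := by
    filter_upwards [eventually_gt_atTop 0, hpd] with s hs hs'
    have hfactor : (1 : Mat r) + s • (1 + (1 + s)⁻¹ • z) =
        s • (s⁻¹ • 1 + (1 + (1 + s)⁻¹ • z)) := by
      match_scalars <;> field_simp
    have hscalar : √s * (s⁻¹ * √s) = 1 := by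
      rw [mul_left_comm, Real.mul_self_sqrt hs.le, inv_mul_cancel₀ hs.ne']
    rw [hfactor, msqrt_smul hs.le hs'.posSemidef]
    simp only [N, smul_mul_assoc, mul_smul_comm, smul_smul, hscalar, one_smul]
  refine tendsto_nhdsWithin_iff.2 ⟨hNuN.congr' hrescale, ?_⟩
  filter_upwards [hrescale, hpd] with s hs hs'
  exact hs ▸ hu.msqrt_mul_mul_msqrt hs'

theorem msqrt_mul_mul_msqrt_add_smul_sub_posSemidef {u z : Mat r} (hu : u.PosSemidef)
    (hz : z.PosSemidef) {s : ℝ} (hs : 0 < s) :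
    (msqrt (1 + s⁻¹ • u) * z * msqrt (1 + s⁻¹ • u) + (1 + s⁻¹) • u - u).PosSemidef := by
  have hsu := hu.smul (inv_pos.2 hs).le
  have hsplit : msqrt (1 + s⁻¹ • u) * z * msqrt (1 + s⁻¹ • u) + (1 + s⁻¹) • u - u =
      msqrt (1 + s⁻¹ • u) * z * msqrt (1 + s⁻¹ • u) + s⁻¹ • u := by
    module
  rw [hsplit]
  exact (hz.msqrt_mul_mul_msqrt (PosSemidef.one.add hsu)).add hsu

theorem tendsto_msqrt_mul_mul_msqrt_add_smul {u : Mat r} (hu : u.PosSemidef) (z : Mat r) :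
    Tendsto (fun s : ℝ => msqrt (1 + s⁻¹ • u) * z * msqrt (1 + s⁻¹ • u) + (1 + s⁻¹) • u)
      atTop (𝓝 (u + z)) := by
  have hQ := tendsto_msqrt_one_add_inv_smul hu
  have := ((hQ.mul_const z).mul hQ).add
    (((tendsto_const_nhds (x := (1 : ℝ))).add tendsto_inv_atTop_zero).smul_const u)
  rwa [one_mul, mul_one, add_zero, one_smul, add_comm] at this

theorem additive_from_symmetric_equation_general {r : ℕ} (f g : Mat r → ℝ)
    (hf : ContinuousOn f {x : Mat r | x.PosDef})
    (hg : ContinuousOn g {x : Mat r | x.PosDef})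
    (heq : ∀ x y : Mat r, x.PosDef → y.PosDef →
      f x + g (msqrt (1 + x) * y * msqrt (1 + x)) =
        g y + f (msqrt (1 + y) * x * msqrt (1 + y)))
    (hlim : Tendsto (fun α : ℝ => f (α • (1 : Mat r))) (𝓝[>] 0) (𝓝 0)) :
    ∀ u z : Mat r, u.PosDef → z.PosDef → f u + f z = f (u + z) := by
  intro u z hu hz
  have h : SymmetricEquation f g := heq
  set V : ℝ → Mat r := fun s =>
    msqrt (1 + s⁻¹ • u) * z * msqrt (1 + s⁻¹ • u) + (1 + s⁻¹) • u
  have hV : Tendsto V atTop (𝓝 (u + z)) := tendsto_msqrt_mul_mul_msqrt_add_smul hu.posSemidef z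
  have hVu : ∀ᶠ s in atTop, (V s - u).PosSemidef := (eventually_gt_atTop 0).mono fun _ hs =>
    msqrt_mul_mul_msqrt_add_smul_sub_posSemidef hu.posSemidef hz.posSemidef hs
  have hinv : Tendsto (fun s : ℝ => s⁻¹) atTop (𝓝[>] 0) := tendsto_inv_atTop_nhdsGT_zero
  have hinv1 : Tendsto (fun s : ℝ => (1 + s)⁻¹) atTop (𝓝[>] 0) :=
    hinv.comp (tendsto_atTop_add_const_left _ 1 tendsto_id)
  have lhs := ((h.tendsto_smul hg hlim hinv1 hz).add (h.tendsto_smul hg hlim hinv hu)).sub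
    (h.tendsto_smul_of_le hg hlim hinv1 hV hu hVu (by simpa using hz.posSemidef))
  have rhs := ((tendsto_const_nhds (x := f z)).add
      ((hf u hu).tendsto.comp (tendsto_msqrt_mul_inv_smul_mul_msqrt hu hz.posSemidef))).sub
    ((hf _ (hu.add hz)).tendsto.comp (tendsto_nhdsWithin_iff.2
      ⟨hV, hVu.mono fun _ hs => by simpa using PosDef.posSemidef_add hs hu⟩))
  rw [add_zero, sub_zero] at lhs
  have hlimits := tendsto_nhds_unique (lhs.congr' <| by
    filter_upwards [eventually_gt_atTop 0] with s hs using h.three_point_identity hs hu hz) rhs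
  linarith

/-- **Additivity from a symmetric functional equation.**  If continuous `f, g` on `Ω₊`
satisfy `f(x) + g(P((e+x)^{1/2})y) = g(y) + f(P((e+y)^{1/2})x)` and `f(α e) → 0` as
`α → 0⁺`, then `f` is additive on `Ω₊`. -/
theorem additive_from_symmetric_equation {r : ℕ} (hr : 1 ≤ r) (f g : Mat r → ℝ)
    (hf : ContinuousOn f {x : Mat r | x.PosDef})
    (hg : ContinuousOn g {x : Mat r | x.PosDef})
    (heq : ∀ x y : Mat r, x.PosDef → y.PosDef →
      f x + g (msqrt (1 + x) * y * msqrt (1 + x)) =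
        g y + f (msqrt (1 + y) * x * msqrt (1 + y)))
    (hlim : Tendsto (fun α : ℝ => f (α • (1 : Mat r))) (𝓝[>] 0) (𝓝 0)) :
    ∀ u z : Mat r, u.PosDef → z.PosDef → f u + f z = f (u + z) :=
  additive_from_symmetric_equation_general f g hf hg heq hlim
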